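/- With edge weights on the augmented rotation DAG G defined by initializing all weights to 0 and, for each variable pair bg, adding w_{bg} to every edge of the chosen path P_{bg}, the weight of the ideal cut defined by S equals the total weight Σ_{bg ∈ M_C} w_{bg} of the stable matching M_C generated by the corresponding closed subset C. Consequently, maximum weight stable matchings are in one-to-one correspondence with maximum weight ideal cuts in G. -/

import Mathlib

/-- `rB b g` is the rank boy `b` gives girl `g` (smaller = more preferred), and
`rG g b` the rank girl `g` gives boy `b`.  A matching (bijection) `M` is stable if
no pair `(b, g)` prefer each other to their partners. -/
def StableM {B G : Type*} (rB : B → G → ℕ) (rG : G → B → ℕ) (M : B ≃ G) : Prop :=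
  ∀ (b : B) (g : G), ¬ (rB b g < rB b (M b) ∧ rG g b < rG g (M.symm g))

/-- The total weight of a matching. -/
def matchWeight {B G : Type*} [Fintype B] (w : B → G → ℚ) (M : B ≃ G) : ℚ :=
  ∑ b, w b (M b)

/-- A maximum weight stable matching. -/
def MaxWtStable {B G : Type*} [Fintype B] (rB : B → G → ℕ) (rG : G → B → ℕ)
    (w : B → G → ℚ) (M : B ≃ G) : Prop :=
  StableM rB rG M ∧ ∀ N : B ≃ G, StableM rB rG N → matchWeight w N ≤ matchWeight w M

/-- A rotation: a cyclic sequence of `r ≥ 2` distinct pairs `(b_i, g_i)`.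
Indices live in `ZMod r` so that `i + 1` wraps around. -/
structure Rotation (B G : Type*) where
  r : ℕ
  two_le : 2 ≤ r
  bs : ZMod r → B
  gs : ZMod r → G
  inj_bs : Function.Injective bs
  inj_gs : Function.Injective gs

/-- `ρ` is exposed in `M`: each `b_i` is matched to `g_i`, and `g_{i+1} = s_M(b_i)` is
the first girl on `b_i`'s list preferring `b_i` to her `M`-partner. -/
def Exposed {B G : Type*} (rB : B → G → ℕ) (rG : G → B → ℕ) (M : B ≃ G)
    (ρ : Rotation B G) : Prop :=
  (∀ i, M (ρ.bs i) = ρ.gs i) ∧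
    (∀ i, rG (ρ.gs (i + 1)) (ρ.bs i) < rG (ρ.gs (i + 1)) (M.symm (ρ.gs (i + 1)))) ∧
    (∀ i, ∀ g : G, rB (ρ.bs i) g < rB (ρ.bs i) (ρ.gs (i + 1)) →
      ¬ (rG g (ρ.bs i) < rG g (M.symm g)))

/-- `M'` results from `M` by eliminating the rotation `ρ` (exposed in `M`):
each `b_i` moves from `g_i` to `g_{i+1}`, everyone else keeps their partner. -/
def Eliminates {B G : Type*} (rB : B → G → ℕ) (rG : G → B → ℕ)
    (M : B ≃ G) (ρ : Rotation B G) (M' : B ≃ G) : Prop :=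
  Exposed rB rG M ρ ∧ (∀ i, M' (ρ.bs i) = ρ.gs (i + 1)) ∧
    ∀ b : B, (∀ i, b ≠ ρ.bs i) → M' b = M b

/-- `ElimChain rB rG M L M'`: the list `L` of rotations can be eliminated one after
another starting from `M` and ending at `M'`. -/
def ElimChain {B G : Type*} (rB : B → G → ℕ) (rG : G → B → ℕ) :
    (B ≃ G) → List (Rotation B G) → (B ≃ G) → Prop
  | M, [], M' => M = M'
  | M, ρ :: L, M' => ∃ N : B ≃ G, Eliminates rB rG M ρ N ∧ ElimChain rB rG N L M'

/-- The boy-optimal stable matching. -/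
def BoyOptimal {B G : Type*} (rB : B → G → ℕ) (rG : G → B → ℕ) (M₀ : B ≃ G) : Prop :=
  StableM rB rG M₀ ∧ ∀ M : B ≃ G, StableM rB rG M → ∀ b, rB b (M₀ b) ≤ rB b (M b)

/-- The girl-optimal stable matching. -/
def GirlOptimal {B G : Type*} (rB : B → G → ℕ) (rG : G → B → ℕ) (Mz : B ≃ G) : Prop :=
  StableM rB rG Mz ∧ ∀ M : B ≃ G, StableM rB rG M → ∀ g, rG g (Mz.symm g) ≤ rG g (M.symm g)

/-- `ρ` is a rotation of the instance: it is exposed in some stable matching. -/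
def IsRotation {B G : Type*} (rB : B → G → ℕ) (rG : G → B → ℕ) (ρ : Rotation B G) : Prop :=
  ∃ M : B ≃ G, StableM rB rG M ∧ Exposed rB rG M ρ

/-- The set of pairs of a rotation (rotations are identified up to cyclic shift by
having equal pair sets). -/
def rotPairs {B G : Type*} (ρ : Rotation B G) : Set (B × G) :=
  {p | ∃ i, p = (ρ.bs i, ρ.gs i)}

/-- `ρ` moves `b` to `g`: after eliminating `ρ`, `b` is matched to `g`. -/
def MovesTo {B G : Type*} (ρ : Rotation B G) (b : B) (g : G) : Prop :=
  ∃ i, ρ.bs i = b ∧ ρ.gs (i + 1) = g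

/-- `ρ` moves `b` from `g`: before eliminating `ρ`, `b` is matched to `g`. -/
def MovesFrom {B G : Type*} (ρ : Rotation B G) (b : B) (g : G) : Prop :=
  ∃ i, ρ.bs i = b ∧ ρ.gs i = g

/-- `ρ'` precedes `ρ` in the rotation poset: `ρ'` is eliminated (up to cyclic shift)
in every sequence of eliminations from the boy-optimal matching `M₀` to a stable
matching in which `ρ` is exposed. -/
def Precedes {B G : Type*} (rB : B → G → ℕ) (rG : G → B → ℕ)
    (ρ' ρ : Rotation B G) : Prop :=
  ∀ (M₀ : B ≃ G) (L : List (Rotation B G)) (M : B ≃ G),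
    BoyOptimal rB rG M₀ → ElimChain rB rG M₀ L M → Exposed rB rG M ρ →
      ∃ ρ'' ∈ L, rotPairs ρ'' = rotPairs ρ'

/-- Vertices of the DAG `G` built from the rotation poset: a source, a sink, and one
vertex per rotation (indexed by `ι`). -/
inductive Vtx (ι : Type*) where
  | src : Vtx ι
  | snk : Vtx ι
  | node : ι → Vtx ι
deriving DecidableEq

instance {ι : Type*} [Fintype ι] [DecidableEq ι] : Fintype (Vtx ι) :=
  Fintype.ofSurjective
    (fun x : Option (Option ι) =>
      match x with
      | none => Vtx.src
      | some none => Vtx.snk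
      | some (some i) => Vtx.node i)
    (by rintro (_ | _ | i) <;> [exact ⟨none, rfl⟩; exact ⟨some none, rfl⟩;
          exact ⟨some (some i), rfl⟩])

/-- `M` is the stable matching generated by the (closed) set `C` of rotation indices:
it is obtained from `M₀` by eliminating the rotations of `C` in some (topological)
order. -/
def GeneratedBy {B G ι : Type*} (rB : B → G → ℕ) (rG : G → B → ℕ) (M₀ : B ≃ G)
    (rot : ι → Rotation B G) (C : Set ι) (M : B ≃ G) : Prop :=
  ∃ L : List ι, (∀ i, i ∈ L ↔ i ∈ C) ∧ ElimChain rB rG M₀ (L.map rot) M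

/-- The defining conditions on the path `P_{bg}` associated to a pair `bg` occurring in
some but not all stable matchings (`M₀` boy-optimal, `Mz` girl-optimal):
from the source to the rotation moving `b` from `g`, or from the rotation moving `b`
to `g` to the sink, or between the two rotations, according to whether `bg ∈ M₀`
and/or `bg ∈ Mz`. -/
def PathSpec {B G ι : Type*} (M₀ Mz : B ≃ G) (rot : ι → Rotation B G)
    (b : B) (g : G) (P : List (Vtx ι)) : Prop :=
  (M₀ b = g ∧ Mz b ≠ g ∧ ∃ i, MovesFrom (rot i) b g ∧
      P.head? = some Vtx.src ∧ P.getLast? = some (Vtx.node i)) ∨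
  (M₀ b ≠ g ∧ Mz b = g ∧ ∃ i, MovesTo (rot i) b g ∧
      P.head? = some (Vtx.node i) ∧ P.getLast? = some Vtx.snk) ∨
  (M₀ b ≠ g ∧ Mz b ≠ g ∧ ∃ i j, MovesTo (rot i) b g ∧ MovesFrom (rot j) b g ∧
      P.head? = some (Vtx.node i) ∧ P.getLast? = some (Vtx.node j))

/-- The cut with source side `S` cuts the path `P`: some edge of `P` crosses from `S`
to its complement. -/
def CutsPath {W : Type*} (S : Set W) (P : List W) : Prop :=
  ∃ q ∈ P.zip P.tail, q.1 ∈ S ∧ q.2 ∉ S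

/-- An ideal cut: `s ∈ S`, `t ∉ S`, and no edge of `E` enters `S` from its complement. -/
def IdealCut {V : Type*} (E : V → V → Prop) (s t : V) (S : Finset V) : Prop :=
  s ∈ S ∧ t ∉ S ∧ ∀ u v : V, E u v → v ∈ S → u ∈ S

/-- The weight of the cut: total weight of edges from `S` to its complement. -/
def cutWeight {V : Type*} [Fintype V] [DecidableEq V] (E : V → V → Prop) [DecidableRel E]
    (w : V → V → ℚ) (S : Finset V) : ℚ :=
  ∑ q ∈ Finset.univ.filter (fun q : V × V => E q.1 q.2 ∧ q.1 ∈ S ∧ q.2 ∉ S), w q.1 q.2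

/-- A maximum weight ideal cut. -/
def MaxIdealCut {V : Type*} [Fintype V] [DecidableEq V] (E : V → V → Prop) [DecidableRel E]
    (s t : V) (w : V → V → ℚ) (S : Finset V) : Prop :=
  IdealCut E s t S ∧ ∀ S' : Finset V, IdealCut E s t S' → cutWeight E w S' ≤ cutWeight E w S

/-- The directed graph is acyclic. -/
def Acyclic {V : Type*} (E : V → V → Prop) : Prop := ∀ v : V, ¬ Relation.TransGen E v v

/-- Every vertex is reachable from `s` and reaches `t`. -/
def EveryVertexOnPath {V : Type*} (E : V → V → Prop) (s t : V) : Prop :=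
  ∀ v : V, Relation.ReflTransGen E s v ∧ Relation.ReflTransGen E v t

section Basic
variable {B G : Type*} {rB : B → G → ℕ} {rG : G → B → ℕ}

lemma rot_succ_ne (ρ : Rotation B G) (m : ZMod ρ.r) : m + 1 ≠ m := by
  intro h
  have h2 := ρ.two_le
  have h1 : (1 : ZMod ρ.r) = 0 := by
    have : m + 1 = m + 0 := by simpa using h
    exact add_left_cancel this
  haveI : Fact (1 < ρ.r) := ⟨by omega⟩
  haveI : NeZero ρ.r := ⟨by omega⟩
  have := congrArg ZMod.val h1
  rw [ZMod.val_one, ZMod.val_zero] at this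
  omega

lemma stable_le {M : B ≃ G} (hM : StableM rB rG M) {b g}
    (h : rG g b < rG g (M.symm g)) : rB b (M b) ≤ rB b g := by
  by_contra hc
  exact hM b g ⟨by omega, h⟩

lemma elim_moved {M M' : B ≃ G} {ρ : Rotation B G} (hE : Eliminates rB rG M ρ M')
    {m b} (hm : ρ.bs m = b) : M b = ρ.gs m ∧ M' b = ρ.gs (m + 1) := by
  subst hm; exact ⟨hE.1.1 m, hE.2.1 m⟩

lemma elim_strict (hrB : ∀ b, Function.Injective (rB b)) {M M' : B ≃ G}
    {ρ : Rotation B G} (hM : StableM rB rG M) (hE : Eliminates rB rG M ρ M')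
    {m b} (hm : ρ.bs m = b) : rB b (M b) < rB b (M' b) := by
  obtain ⟨h1, h2⟩ := elim_moved hE hm
  rw [h1, h2]
  have hle : rB b (M b) ≤ rB b (ρ.gs (m+1)) := by
    refine stable_le hM ?_
    subst hm; exact hE.1.2.1 m
  rw [h1] at hle
  rcases lt_or_eq_of_le hle with h | h
  · exact h
  · exact absurd (ρ.inj_gs (hrB b h)).symm (rot_succ_ne ρ m)

lemma elim_fix {M M' : B ≃ G} {ρ : Rotation B G} (hE : Eliminates rB rG M ρ M')
    {b} (hb : ∀ m, ρ.bs m ≠ b) : M' b = M b :=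
  hE.2.2 b (fun i h => hb i h.symm)

lemma elim_changed {M M' : B ≃ G} {ρ : Rotation B G} (hE : Eliminates rB rG M ρ M')
    {b} (h : M' b ≠ M b) : ∃ m, ρ.bs m = b := by
  by_contra hc; push_neg at hc
  exact h (elim_fix hE hc)

lemma elim_mono (hrB : ∀ b, Function.Injective (rB b)) {M M' : B ≃ G}
    {ρ : Rotation B G} (hM : StableM rB rG M) (hE : Eliminates rB rG M ρ M')
    (b : B) : rB b (M b) ≤ rB b (M' b) := by
  by_cases h : ∃ m, ρ.bs m = b
  · obtain ⟨m, hm⟩ := h; exact (elim_strict hrB hM hE hm).le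
  · push_neg at h
    rw [elim_fix hE h]

/-- the girl side: every girl weakly improves in an elimination. -/
lemma elim_symm_le {M M' : B ≃ G} {ρ : Rotation B G} (hE : Eliminates rB rG M ρ M')
    (g : G) : rG g (M'.symm g) ≤ rG g (M.symm g) := by
  by_cases h : ∃ i, ρ.gs i = g
  · obtain ⟨i, rfl⟩ := h
    have hg : ρ.gs i = ρ.gs ((i - 1) + 1) := by rw [sub_add_cancel]
    have h1 : M'.symm (ρ.gs i) = ρ.bs (i - 1) := by
      rw [hg]
      exact M'.symm_apply_eq.mpr (hE.2.1 (i - 1)).symm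
    rw [h1]
    have := hE.1.2.1 (i - 1)
    rw [← hg] at this
    exact this.le
  · push_neg at h
    have h2 : M'.symm g = M.symm g := by
      set b' := M'.symm g with hb'
      have hbe : ∀ m, ρ.bs m ≠ b' := by
        intro m hm
        apply h (m + 1)
        rw [← hE.2.1 m, hm, hb', Equiv.apply_symm_apply]
      have : M b' = g := by rw [← elim_fix hE hbe, hb', Equiv.apply_symm_apply]
      exact (M.symm_apply_eq.mpr this.symm).symm
    rw [h2]

lemma stab_pres {M M' : B ≃ G} {ρ : Rotation B G} (hM : StableM rB rG M)
    (hE : Eliminates rB rG M ρ M') : StableM rB rG M' := by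
  rintro b g ⟨h1, h2⟩
  have hg : rG g b < rG g (M.symm g) := lt_of_lt_of_le h2 (elim_symm_le hE g)
  by_cases hb : ∃ m, ρ.bs m = b
  · obtain ⟨m, hm⟩ := hb
    have hM' : M' b = ρ.gs (m + 1) := (elim_moved hE hm).2
    rw [hM'] at h1
    subst hm
    exact hE.1.2.2 m g h1 hg
  · push_neg at hb
    rw [elim_fix hE hb] at h1
    exact hM b g ⟨h1, hg⟩

end Basic
section Chains
variable {B G : Type*} {rB : B → G → ℕ} {rG : G → B → ℕ}

lemma chain_stable_mono (hrB : ∀ b, Function.Injective (rB b)) {M M' : B ≃ G} :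
    ∀ {L : List (Rotation B G)},
    StableM rB rG M → ElimChain rB rG M L M' →
    StableM rB rG M' ∧ ∀ b, rB b (M b) ≤ rB b (M' b) := by
  intro L
  induction L generalizing M with
  | nil => rintro hM rfl; exact ⟨hM, fun b => le_refl _⟩
  | cons ρ L ih =>
    rintro hM ⟨N, hel, hch⟩
    obtain ⟨h1, h2⟩ := ih (stab_pres hM hel) hch
    exact ⟨h1, fun b => le_trans (elim_mono hrB hM hel b) (h2 b)⟩

lemma chain_split {M M' : B ≃ G} : ∀ {L1 L2 : List (Rotation B G)},
    ElimChain rB rG M (L1 ++ L2) M' →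
    ∃ Mm, ElimChain rB rG M L1 Mm ∧ ElimChain rB rG Mm L2 M' := by
  intro L1
  induction L1 generalizing M with
  | nil => intro L2 h; exact ⟨M, rfl, h⟩
  | cons ρ L ih =>
    rintro L2 ⟨N, hel, hch⟩
    obtain ⟨Mm, ha, hb⟩ := ih hch
    exact ⟨Mm, ⟨N, hel, ha⟩, hb⟩

lemma chain_from {M M' : B ≃ G} {b g} : ∀ {L : List (Rotation B G)},
    ElimChain rB rG M L M' → M b = g → M' b ≠ g →
    ∃ ρ ∈ L, MovesFrom ρ b g := by
  intro L
  induction L generalizing M with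
  | nil => rintro rfl h1 h2; exact absurd h1 h2
  | cons ρ L ih =>
    rintro ⟨N, hel, hch⟩ h1 h2
    by_cases hN : N b = g
    · obtain ⟨σ, hσ, hm⟩ := ih hch hN h2
      exact ⟨σ, List.mem_cons_of_mem _ hσ, hm⟩
    · obtain ⟨m, hm⟩ := elim_changed hel (show N b ≠ M b by rw [h1]; exact hN)
      refine ⟨ρ, List.mem_cons_self, ⟨m, hm, ?_⟩⟩
      rw [← hm] at h1; rw [← hel.1.1 m]; exact h1

lemma chain_to {M M' : B ≃ G} {b g} : ∀ {L : List (Rotation B G)},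
    ElimChain rB rG M L M' → M b ≠ g → M' b = g →
    ∃ ρ ∈ L, MovesTo ρ b g := by
  intro L
  induction L generalizing M with
  | nil => rintro rfl h1 h2; exact absurd h2 h1
  | cons ρ L ih =>
    rintro ⟨N, hel, hch⟩ h1 h2
    by_cases hN : N b = g
    · have hch' : N b ≠ M b := fun h => h1 (h ▸ hN)
      obtain ⟨m, hm⟩ := elim_changed hel hch'
      refine ⟨ρ, List.mem_cons_self, ⟨m, hm, ?_⟩⟩
      rw [← hm] at hN; rw [← hel.2.1 m]; exact hN
    · obtain ⟨σ, hσ, hm⟩ := ih hch hN h2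
      exact ⟨σ, List.mem_cons_of_mem _ hσ, hm⟩

lemma chain_stay_from {M M' : B ≃ G} {b g} : ∀ {L : List (Rotation B G)},
    ElimChain rB rG M L M' → M b = g → (∀ ρ ∈ L, ¬ MovesFrom ρ b g) →
    M' b = g := by
  intro L
  induction L generalizing M with
  | nil => rintro rfl h _; exact h
  | cons ρ L ih =>
    rintro ⟨N, hel, hch⟩ h1 h2
    have hN : N b = g := by
      by_contra hN
      obtain ⟨m, hm⟩ := elim_changed hel (show N b ≠ M b by rw [h1]; exact hN)
      refine h2 ρ (List.mem_cons_self) ⟨m, hm, ?_⟩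
      rw [← hm] at h1; rw [← hel.1.1 m]; exact h1
    exact ih hch hN (fun σ hσ => h2 σ (List.mem_cons_of_mem _ hσ))

lemma chain_depart_strict (hrB : ∀ b, Function.Injective (rB b)) {M M' : B ≃ G}
    {b g} : ∀ {L : List (Rotation B G)},
    StableM rB rG M → ElimChain rB rG M L M' → M b = g → M' b ≠ g →
    rB b g < rB b (M' b) := by
  intro L
  induction L generalizing M with
  | nil => rintro hM rfl h1 h2; exact absurd h1 h2
  | cons ρ L ih =>
    rintro hM ⟨N, hel, hch⟩ h1 h2
    by_cases hN : N b = g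
    · exact ih (stab_pres hM hel) hch hN h2
    · obtain ⟨m, hm⟩ := elim_changed hel (show N b ≠ M b by rw [h1]; exact hN)
      have h3 := elim_strict hrB hM hel hm
      rw [h1] at h3
      exact lt_of_lt_of_le h3 ((chain_stable_mono hrB (stab_pres hM hel) hch).2 b)

lemma chain_elim_from (hrB : ∀ b, Function.Injective (rB b)) {M M' : B ≃ G}
    {b g} : ∀ {L : List (Rotation B G)},
    StableM rB rG M → ElimChain rB rG M L M' → (∃ ρ ∈ L, MovesFrom ρ b g) →
    rB b g < rB b (M' b) := by
  intro L
  induction L generalizing M with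
  | nil => rintro _ rfl ⟨ρ, h, _⟩; exact absurd h List.not_mem_nil
  | cons ρ L ih =>
    rintro hM ⟨N, hel, hch⟩ ⟨σ, hσ, m, hm1, hm2⟩
    rcases List.mem_cons.mp hσ with rfl | hσ'
    · have h3 := elim_strict hrB hM hel hm1
      have h4 : M b = g := by rw [← hm1, ← hm2]; exact hel.1.1 m
      rw [h4] at h3
      exact lt_of_lt_of_le h3 ((chain_stable_mono hrB (stab_pres hM hel) hch).2 b)
    · exact ih (stab_pres hM hel) hch ⟨σ, hσ', m, hm1, hm2⟩

lemma chain_from_once (hrB : ∀ b, Function.Injective (rB b)) {M M' : B ≃ G}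
    {b g} {L1 L2 : List (Rotation B G)} {ρ σ}
    (hM : StableM rB rG M) (hch : ElimChain rB rG M (L1 ++ ρ :: L2) M')
    (hρ : MovesFrom ρ b g) (hσ : σ ∈ L2) (hσf : MovesFrom σ b g) : False := by
  obtain ⟨A, hA1, N, hel, hA2⟩ := chain_split hch
  have hAst : StableM rB rG A := (chain_stable_mono hrB hM hA1).1
  obtain ⟨m, hm1, hm2⟩ := hρ
  have h3 := elim_strict hrB hAst hel hm1
  have h4 : A b = g := by rw [← hm1, ← hm2]; exact hel.1.1 m
  rw [h4] at h3
  obtain ⟨L2a, L2b, rfl⟩ := List.append_of_mem hσ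
  obtain ⟨D, hD1, D2, hel2, _⟩ := chain_split hA2
  obtain ⟨m', hm1', hm2'⟩ := hσf
  have hD : D b = g := by rw [← hm1', ← hm2']; exact hel2.1.1 m'
  have hmono := (chain_stable_mono hrB (stab_pres hAst hel) hD1).2 b
  rw [hD] at hmono
  omega

lemma chain_to_once (hrB : ∀ b, Function.Injective (rB b)) {M M' : B ≃ G}
    {b g} {L1 L2 : List (Rotation B G)} {ρ σ}
    (hM : StableM rB rG M) (hch : ElimChain rB rG M (L1 ++ ρ :: L2) M')
    (hρ : MovesTo ρ b g) (hσ : σ ∈ L2) (hσf : MovesTo σ b g) : False := by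
  obtain ⟨A, hA1, N, hel, hA2⟩ := chain_split hch
  have hAst : StableM rB rG A := (chain_stable_mono hrB hM hA1).1
  obtain ⟨m, hm1, hm2⟩ := hρ
  have hN : N b = g := by rw [← hm1, ← hm2]; exact hel.2.1 m
  obtain ⟨L2a, L2b, rfl⟩ := List.append_of_mem hσ
  obtain ⟨D, hD1, D2, hel2, _⟩ := chain_split hA2
  obtain ⟨m', hm1', hm2'⟩ := hσf
  have hDst : StableM rB rG D := (chain_stable_mono hrB (stab_pres hAst hel) hD1).1
  have h3 := elim_strict hrB hDst hel2 hm1'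
  have hD2 : D2 b = g := by rw [← hm1', ← hm2']; exact hel2.2.1 m'
  rw [hD2] at h3
  have hmono := (chain_stable_mono hrB (stab_pres hAst hel) hD1).2 b
  rw [hN] at hmono
  omega

lemma boy_pessimal {Mz N : B ≃ G} (hrG : ∀ g, Function.Injective (rG g))
    (hMz : GirlOptimal rB rG Mz) (hN : StableM rB rG N) (b : B) :
    rB b (N b) ≤ rB b (Mz b) := by
  by_contra hc
  push_neg at hc
  set g := Mz b with hg
  have h1 : rG g (Mz.symm g) ≤ rG g (N.symm g) := hMz.2 N hN g
  have h2 : Mz.symm g = b := Mz.symm_apply_apply b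
  have h3 : N b ≠ g := fun h => by rw [h] at hc; omega
  have h4 : N.symm g ≠ b := fun h => h3 (N.apply_eq_iff_eq_symm_apply.mpr h.symm)
  rw [h2] at h1
  have h5 : rG g b < rG g (N.symm g) :=
    lt_of_le_of_ne h1 (fun h => h4 (hrG g h).symm)
  exact hN b g ⟨hc, h5⟩

end Chains
section Transfer
variable {B G : Type*} {rB : B → G → ℕ} {rG : G → B → ℕ}

lemma rotPairs_mem {ρ : Rotation B G} {i} : (ρ.bs i, ρ.gs i) ∈ rotPairs ρ := ⟨i, rfl⟩

lemma exposed_transfer (hrB : ∀ b, Function.Injective (rB b)) {M M₂ : B ≃ G}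
    {ρ ρ₂ : Rotation B G} (h1 : Exposed rB rG M ρ) (h2 : Exposed rB rG M₂ ρ₂)
    (hpp : rotPairs ρ = rotPairs ρ₂) {M' : B ≃ G}
    (helim : Eliminates rB rG M ρ M') : Eliminates rB rG M ρ₂ M' := by
  -- pair correspondences
  have corr : ∀ i, ∃ m, ρ₂.bs i = ρ.bs m ∧ ρ₂.gs i = ρ.gs m := by
    intro i
    have : ((ρ₂.bs i, ρ₂.gs i) : B × G) ∈ rotPairs ρ := hpp ▸ rotPairs_mem
    obtain ⟨m, hm⟩ := this
    exact ⟨m, congrArg Prod.fst hm, congrArg Prod.snd hm⟩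
  have corr' : ∀ m, ∃ i, ρ.bs m = ρ₂.bs i ∧ ρ.gs m = ρ₂.gs i := by
    intro m
    have : ((ρ.bs m, ρ.gs m) : B × G) ∈ rotPairs ρ₂ := hpp ▸ rotPairs_mem
    obtain ⟨i, hi⟩ := this
    exact ⟨i, congrArg Prod.fst hi, congrArg Prod.snd hi⟩
  -- M and M₂ agree on rotation girls (symm side)
  have hsymm : ∀ m, M.symm (ρ.gs m) = ρ.bs m := fun m =>
    M.symm_apply_eq.mpr (h1.1 m).symm
  have hsymm2 : ∀ m, M₂.symm (ρ.gs m) = ρ.bs m := by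
    intro m
    obtain ⟨i, ha, hb⟩ := corr' m
    rw [hb, ha]
    exact M₂.symm_apply_eq.mpr (h2.1 i).symm
  -- successor agreement
  have succ_eq : ∀ i m, ρ₂.bs i = ρ.bs m → ρ₂.gs (i + 1) = ρ.gs (m + 1) := by
    intro i m hbm
    set b := ρ.bs m with hb
    obtain ⟨n, hn1, hn2⟩ := corr (i + 1)
    rcases lt_trichotomy (rB b (ρ₂.gs (i+1))) (rB b (ρ.gs (m+1))) with hlt | heq | hgt
    · exfalso
      have h3 := h1.2.2 m (ρ₂.gs (i+1)) hlt
      have h4 := h2.2.1 i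
      rw [hbm] at h4
      have : M₂.symm (ρ₂.gs (i+1)) = M.symm (ρ₂.gs (i+1)) := by
        rw [hn2, hsymm2 n, hsymm n]
      rw [this] at h4
      exact h3 h4
    · exact hrB b heq
    · exfalso
      have h3 := h2.2.2 i (ρ.gs (m+1)) (by rw [hbm]; exact hgt)
      rw [hbm] at h3
      have h4 := h1.2.1 m
      rw [hsymm2 (m+1)] at h3
      rw [hsymm (m+1)] at h4
      exact h3 h4
  have hexp : Exposed rB rG M ρ₂ := by
    refine ⟨?_, ?_, ?_⟩
    · intro i
      obtain ⟨m, ha, hb⟩ := corr i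
      rw [ha, hb]; exact h1.1 m
    · intro i
      obtain ⟨m, ha, hb⟩ := corr i
      rw [succ_eq i m ha, ha]
      exact h1.2.1 m
    · intro i g hg
      obtain ⟨m, ha, hb⟩ := corr i
      rw [succ_eq i m ha, ha] at hg
      rw [ha]
      exact h1.2.2 m g hg
  refine ⟨hexp, ?_, ?_⟩
  · intro i
    obtain ⟨m, ha, hb⟩ := corr i
    rw [ha, succ_eq i m ha]
    exact helim.2.1 m
  · intro b hb
    refine helim.2.2 b (fun m => ?_)
    obtain ⟨i, ha, _⟩ := corr' m
    rw [ha]; exact hb i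

end Transfer
section Construct
variable {B G : Type*} {rB : B → G → ℕ} {rG : G → B → ℕ}

lemma exposed_step [Fintype B] [Fintype G]
    (hrB : ∀ b, Function.Injective (rB b)) (hrG : ∀ g, Function.Injective (rG g))
    {M N : B ≃ G} (hM : StableM rB rG M) (hN : StableM rB rG N)
    (hle : ∀ b, rB b (M b) ≤ rB b (N b)) (hne : M ≠ N) :
    ∃ ρ M', Eliminates rB rG M ρ M' ∧ (∀ b, rB b (M' b) ≤ rB b (N b)) ∧
      ∃ b, rB b (M b) < rB b (M' b) := by
  classical
  have hsucc : ∀ b : B, ∃ g : G, M b ≠ N b →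
      (rG g b < rG g (M.symm g)) ∧ rB b g ≤ rB b (N b) ∧
      (∀ g', rG g' b < rG g' (M.symm g') → rB b g ≤ rB b g') := by
    intro b
    by_cases hb : M b = N b
    · exact ⟨M b, fun h => absurd hb h⟩
    · have hq : rG (N b) b < rG (N b) (M.symm (N b)) := by
        set g' := N b with hg'
        set b₂ := M.symm g' with hb2
        have hMb2 : M b₂ = g' := M.apply_symm_apply g'
        have hne2 : b₂ ≠ b := fun h => hb (by rw [← h, hMb2])
        have hg2 : g' ≠ N b₂ := fun h => hne2 (N.injective (by rw [← h]))
        have hlt : rB b₂ g' < rB b₂ (N b₂) := by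
          have := hle b₂
          rw [hMb2] at this
          exact lt_of_le_of_ne this (fun h => hg2 (hrB b₂ h))
        have hstab := hN b₂ g'
        have h5 : ¬ rG g' b₂ < rG g' (N.symm g') := fun h => hstab ⟨hlt, h⟩
        have h6 : N.symm g' = b := N.symm_apply_apply b
        rw [h6] at h5
        push_neg at h5
        rw [hb2]
        exact lt_of_le_of_ne h5 (fun h => hne2 (hrG g' h).symm)
      obtain ⟨g, hgQ, hgmin⟩ := Finset.exists_min_image
        (Finset.univ.filter fun g => rG g b < rG g (M.symm g)) (fun g => rB b g)
        ⟨N b, by simpa using hq⟩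
      simp only [Finset.mem_filter, Finset.mem_univ, true_and] at hgQ
      refine ⟨g, fun _ => ⟨hgQ, ?_, ?_⟩⟩
      · exact hgmin (N b) (by simpa using hq)
      · intro g' hg'
        exact hgmin g' (by simpa using hg')
  choose s hs using hsucc
  -- properties
  have P1 : ∀ b, M b ≠ N b → rG (s b) b < rG (s b) (M.symm (s b)) :=
    fun b hb => (hs b hb).1
  have P2 : ∀ b, M b ≠ N b → rB b (s b) ≤ rB b (N b) := fun b hb => (hs b hb).2.1
  have P3 : ∀ b, M b ≠ N b → ∀ g', rG g' b < rG g' (M.symm g') →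
      rB b (s b) ≤ rB b g' := fun b hb => (hs b hb).2.2
  have P4 : ∀ b, M b ≠ N b → rB b (M b) < rB b (s b) := by
    intro b hb
    have h1 := stable_le hM (P1 b hb)
    refine lt_of_le_of_ne h1 (fun h => ?_)
    have h2 : M b = s b := hrB b h
    have := P1 b hb
    rw [← h2, M.symm_apply_apply] at this
    omega
  set π : B → B := fun b => M.symm (s b) with hπ
  have P5 : ∀ b, M (π b) = s b := fun b => M.apply_symm_apply (s b)
  have P6 : ∀ b, M b ≠ N b → M (π b) ≠ N (π b) := by
    intro b hb hc
    rw [P5 b] at hc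
    rcases lt_or_eq_of_le (P2 b hb) with hlt | heq
    · refine hN b (s b) ⟨hlt, ?_⟩
      have : N.symm (s b) = π b := N.symm_apply_eq.mpr hc
      rw [this]
      exact P1 b hb
    · have h1 : s b = N b := hrB b heq
      have h2 : π b = b := N.injective (by rw [← hc, h1])
      have h5 := P5 b
      rw [h2] at h5
      have := P4 b hb
      rw [h5] at this
      omega
  have P7 : ∀ b, M b ≠ N b → π b ≠ b := by
    intro b hb hc
    have h5 := P5 b
    rw [hc] at h5
    have := P4 b hb
    rw [h5] at this
    omega
  obtain ⟨b₀, hb₀⟩ : ∃ b₀, M b₀ ≠ N b₀ := by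
    by_contra hc
    push_neg at hc
    exact hne (Equiv.ext hc)
  have iter_mem : ∀ n, M (π^[n] b₀) ≠ N (π^[n] b₀) := by
    intro n
    induction n with
    | zero => exact hb₀
    | succ n ih => rw [Function.iterate_succ_apply']; exact P6 _ ih
  obtain ⟨p, q, hpq, heqpq⟩ := Finite.exists_ne_map_eq_of_infinite (fun n : ℕ => π^[n] b₀)
  wlog hpq' : p < q generalizing p q
  · exact this q p hpq.symm heqpq.symm (by omega)
  set b := π^[p] b₀ with hbdef
  have hcyc : ∃ k, 0 < k ∧ π^[k] b = b := by
    refine ⟨q - p, by omega, ?_⟩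
    rw [hbdef, ← Function.iterate_add_apply]
    have : q - p + p = q := by omega
    rw [this]
    exact heqpq.symm
  set r := Nat.find hcyc with hrdef
  have hspec := Nat.find_spec hcyc
  rw [← hrdef] at hspec
  obtain ⟨hrpos, hrcyc⟩ := hspec
  have bmem : ∀ n, M (π^[n] b) ≠ N (π^[n] b) := by
    intro n
    rw [hbdef, ← Function.iterate_add_apply]
    exact iter_mem (n + p)
  have hr1 : r ≠ 1 := by
    intro h
    rw [h] at hrcyc
    exact P7 b (bmem 0) hrcyc
  have hr2 : 2 ≤ r := by omega
  haveI : NeZero r := ⟨by omega⟩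
  haveI : Fact (1 < r) := ⟨by omega⟩
  set bsf : ZMod r → B := fun i => π^[i.val] b with hbsf
  have aux : ∀ a c : ℕ, a < c → c < r → π^[a] b ≠ π^[c] b := by
    intro a c hac hcr heqac
    have h1 : π^[r - c + a] b = b := by
      rw [Function.iterate_add_apply, heqac, ← Function.iterate_add_apply]
      have : r - c + c = r := by omega
      rw [this]
      exact hrcyc
    have hmin := Nat.find_min hcyc (m := r - c + a) (by omega)
    exact hmin ⟨by omega, h1⟩
  have bsinj : Function.Injective bsf := by
    intro i j hij
    by_contra hne'
    have hvalne : i.val ≠ j.val := fun h => hne' (ZMod.val_injective r h)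
    rcases Nat.lt_or_ge i.val j.val with h | h
    · exact aux i.val j.val h (ZMod.val_lt j) hij
    · exact aux j.val i.val (by omega) (ZMod.val_lt i) hij.symm
  have bs_succ : ∀ i : ZMod r, bsf (i + 1) = π (bsf i) := by
    intro i
    have hv : (i + 1).val = (i.val + 1) % r := by
      rw [ZMod.val_add, ZMod.val_one]
    have hvi := ZMod.val_lt i
    rcases Nat.lt_or_ge (i.val + 1) r with h | h
    · show π^[(i+1).val] b = π (π^[i.val] b)
      rw [hv, Nat.mod_eq_of_lt h, Function.iterate_succ_apply']
    · have h2 : i.val + 1 = r := by omega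
      show π^[(i+1).val] b = π (π^[i.val] b)
      rw [hv, h2, Nat.mod_self, Function.iterate_zero_apply,
        ← Function.iterate_succ_apply' π i.val b, show i.val.succ = r from h2, hrcyc]
  set gsf : ZMod r → G := fun i => M (bsf i) with hgsf
  have gsinj : Function.Injective gsf := fun i j h => bsinj (M.injective h)
  set ρ : Rotation B G := ⟨r, hr2, bsf, gsf, bsinj, gsinj⟩ with hρ
  have memD : ∀ i : ZMod r, M (bsf i) ≠ N (bsf i) := fun i => bmem i.val
  have gs_succ : ∀ i, gsf (i + 1) = s (bsf i) := by
    intro i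
    show M (bsf (i+1)) = s (bsf i)
    rw [bs_succ, P5]
  have hexp : Exposed rB rG M ρ := by
    refine ⟨fun i => rfl, fun i => ?_, fun i g hg => ?_⟩
    · show rG (gsf (i+1)) (bsf i) < rG (gsf (i+1)) (M.symm (gsf (i+1)))
      rw [gs_succ]
      exact P1 _ (memD i)
    · show ¬ (rG g (bsf i) < rG g (M.symm g))
      intro hq
      rw [show ρ.gs (i+1) = gsf (i+1) from rfl, gs_succ] at hg
      exact absurd (P3 _ (memD i) g hq) (not_le.mpr hg)
  -- the permutation σ
  have hdex : ∀ i : ZMod r, ∃ j, bsf j = bsf i := fun i => ⟨i, rfl⟩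
  set tf : B → B := fun x => if h : ∃ i, bsf i = x then bsf (Classical.choose h + 1) else x with htfdef
  set vf : B → B := fun x => if h : ∃ i, bsf i = x then bsf (Classical.choose h - 1) else x with hvfdef
  have htf : ∀ i, tf (bsf i) = bsf (i + 1) := by
    intro i
    show (if h : ∃ j, bsf j = bsf i then bsf (Classical.choose h + 1) else bsf i) = bsf (i + 1)
    rw [dif_pos (hdex i)]
    congr 1
    rw [bsinj (Classical.choose_spec (hdex i))]
  have hvf : ∀ i, vf (bsf i) = bsf (i - 1) := by
    intro i
    show (if h : ∃ j, bsf j = bsf i then bsf (Classical.choose h - 1) else bsf i) = bsf (i - 1)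
    rw [dif_pos (hdex i)]
    congr 1
    rw [bsinj (Classical.choose_spec (hdex i))]
  have htf' : ∀ x, (∀ i, bsf i ≠ x) → tf x = x := by
    intro x hx
    show (if h : ∃ j, bsf j = x then bsf (Classical.choose h + 1) else x) = x
    rw [dif_neg (fun hh : ∃ j, bsf j = x => hx hh.choose hh.choose_spec)]
  have hvf' : ∀ x, (∀ i, bsf i ≠ x) → vf x = x := by
    intro x hx
    show (if h : ∃ j, bsf j = x then bsf (Classical.choose h - 1) else x) = x
    rw [dif_neg (fun hh : ∃ j, bsf j = x => hx hh.choose hh.choose_spec)]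
  have hlinv : Function.LeftInverse vf tf := by
    intro x
    by_cases h : ∃ i, bsf i = x
    · obtain ⟨i, rfl⟩ := h
      rw [htf, hvf, add_sub_cancel_right]
    · push_neg at h
      rw [htf' x h, hvf' x h]
  have hrinv : Function.RightInverse vf tf := by
    intro x
    by_cases h : ∃ i, bsf i = x
    · obtain ⟨i, rfl⟩ := h
      rw [hvf, htf, sub_add_cancel]
    · push_neg at h
      rw [hvf' x h, htf' x h]
  set σ : B ≃ B := ⟨tf, vf, hlinv, hrinv⟩ with hσ
  set M' : B ≃ G := σ.trans M with hM'
  have hM'app : ∀ x, M' x = M (tf x) := fun x => rfl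
  have helim : Eliminates rB rG M ρ M' := by
    refine ⟨hexp, fun i => ?_, fun b' hb' => ?_⟩
    · show M' (bsf i) = gsf (i + 1)
      rw [hM'app, htf]
    · rw [hM'app, htf' b' (fun i h => hb' i h.symm)]
  have hinv : ∀ b', rB b' (M' b') ≤ rB b' (N b') := by
    intro b'
    by_cases h : ∃ i, bsf i = b'
    · obtain ⟨i, rfl⟩ := h
      rw [hM'app, htf, show M (bsf (i+1)) = gsf (i+1) from rfl, gs_succ]
      exact P2 _ (memD i)
    · push_neg at h
      rw [hM'app, htf' b' h]
      exact hle b'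
  refine ⟨ρ, M', helim, hinv, ⟨b, ?_⟩⟩
  have hb0 : bsf 0 = b := by
    show π^[(0 : ZMod r).val] b = b
    rw [ZMod.val_zero, Function.iterate_zero_apply]
  have := P4 b (bmem 0)
  calc rB b (M b) < rB b (s b) := this
    _ = rB b (M' b) := by
        rw [← hb0, hM'app, htf, show M (bsf (0+1)) = gsf (0+1) from rfl, gs_succ, hb0]
end Construct
section Reach
variable {B G ι : Type*} {rB : B → G → ℕ} {rG : G → B → ℕ}

lemma reach_aux [Fintype B] [Fintype G]
    (hrB : ∀ b, Function.Injective (rB b)) (hrG : ∀ g, Function.Injective (rG g))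
    {N : B ≃ G} (hN : StableM rB rG N) (rot : ι → Rotation B G)
    (hrot : ∀ i, IsRotation rB rG (rot i))
    (hall : ∀ ρ, IsRotation rB rG ρ → ∃ i, rotPairs (rot i) = rotPairs ρ) :
    ∀ (n : ℕ) (M : B ≃ G), StableM rB rG M → (∀ b, rB b (M b) ≤ rB b (N b)) →
      (∑ b, (rB b (N b) - rB b (M b))) ≤ n →
      ∃ L : List ι, ElimChain rB rG M (L.map rot) N := by
  intro n
  induction n with
  | zero =>
    intro M hM hle hsum
    by_cases hMN : M = N
    · exact ⟨[], hMN⟩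
    · obtain ⟨ρ, M', helim, hinv, bw, hbw⟩ := exposed_step hrB hrG hM hN hle hMN
      exfalso
      have hlt : ∑ b, (rB b (N b) - rB b (M' b)) < ∑ b, (rB b (N b) - rB b (M b)) := by
        refine Finset.sum_lt_sum (fun b _ => ?_) ⟨bw, Finset.mem_univ bw, ?_⟩
        · exact Nat.sub_le_sub_left (elim_mono hrB hM helim b) _
        · have := hinv bw
          omega
      omega
  | succ n ih =>
    intro M hM hle hsum
    by_cases hMN : M = N
    · exact ⟨[], hMN⟩
    · obtain ⟨ρ, M', helim, hinv, bw, hbw⟩ := exposed_step hrB hrG hM hN hle hMN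
      obtain ⟨i, hi⟩ := hall ρ ⟨M, hM, helim.1⟩
      obtain ⟨M₂, hM₂, hexp₂⟩ := hrot i
      have helim' : Eliminates rB rG M (rot i) M' :=
        exposed_transfer hrB helim.1 hexp₂ hi.symm helim
      have hlt : ∑ b, (rB b (N b) - rB b (M' b)) < ∑ b, (rB b (N b) - rB b (M b)) := by
        refine Finset.sum_lt_sum (fun b _ => ?_) ⟨bw, Finset.mem_univ bw, ?_⟩
        · exact Nat.sub_le_sub_left (elim_mono hrB hM helim b) _
        · have := hinv bw
          omega
      obtain ⟨L, hL⟩ := ih M' (stab_pres hM helim) hinv (by omega)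
      exact ⟨i :: L, ⟨M', helim', hL⟩⟩

lemma reach [Fintype B] [Fintype G]
    (hrB : ∀ b, Function.Injective (rB b)) (hrG : ∀ g, Function.Injective (rG g))
    {M₀ N : B ≃ G} (hM₀ : BoyOptimal rB rG M₀) (hN : StableM rB rG N)
    (rot : ι → Rotation B G) (hrot : ∀ i, IsRotation rB rG (rot i))
    (hall : ∀ ρ, IsRotation rB rG ρ → ∃ i, rotPairs (rot i) = rotPairs ρ) :
    ∃ L : List ι, ElimChain rB rG M₀ (L.map rot) N :=
  reach_aux hrB hrG hN rot hrot hall _ M₀ hM₀.1 (hM₀.2 N hN) (le_refl _)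

end Reach
section Cuts
variable {V : Type*} [Fintype V] [DecidableEq V]

omit [Fintype V] [DecidableEq V] in
lemma chain_out {E : V → V → Prop} {S : Finset V}
    (hcl : ∀ u v : V, E u v → v ∈ S → u ∈ S) :
    ∀ (P : List V) (v : V), List.Chain E v P → v ∉ S → ∀ x ∈ v :: P, x ∉ S := by
  intro P
  induction P with
  | nil =>
    intro v _ hv x hx
    rw [List.mem_singleton] at hx
    exact hx ▸ hv
  | cons w P ih =>
    intro v hch hv x hx
    obtain ⟨hvw, hch'⟩ := List.chain_cons.mp hch
    have hw : w ∉ S := fun hw => hv (hcl v w hvw hw)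
    rcases List.mem_cons.mp hx with rfl | hx'
    · exact hv
    · exact ih w hch' hw x hx'

omit [Fintype V] [DecidableEq V] in
lemma getLast?_mem' : ∀ {P : List V} {l : V}, P.getLast? = some l → l ∈ P := by
  intro P l h
  have : l ∈ P.getLast? := h ▸ rfl
  obtain ⟨hne, rfl⟩ := List.mem_getLast?_eq_getLast this
  exact List.getLast_mem hne

lemma cross_card (E : V → V → Prop) [DecidableRel E] (S : Finset V)
    (hcl : ∀ u v : V, E u v → v ∈ S → u ∈ S) :
    ∀ (P : List V), P.Chain' E → ∀ hd l, P.head? = some hd → P.getLast? = some l →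
    (Finset.univ.filter fun q : V × V =>
        E q.1 q.2 ∧ q.1 ∈ S ∧ q.2 ∉ S ∧ q ∈ P.zip P.tail).card =
      if hd ∈ S ∧ l ∉ S then 1 else 0 := by
  intro P
  induction P with
  | nil => intro _ hd l hh _; simp at hh
  | cons x rest ih =>
    intro hch hd l hh hl
    rw [List.head?_cons, Option.some_inj] at hh
    subst hh
    have hchain : List.Chain E x rest := hch
    cases rest with
    | nil =>
      simp only [List.getLast?_singleton, Option.some_inj] at hl
      subst hl
      rw [if_neg (fun hc => hc.2 hc.1)]
      rw [Finset.card_eq_zero, Finset.filter_eq_empty_iff]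
      intro q _
      simp
    | cons y rest' =>
      rw [List.getLast?_cons_cons] at hl
      have hlmem : l ∈ y :: rest' := getLast?_mem' hl
      have hchain' : List.Chain E y rest' := (List.chain_cons.mp hchain).2
      have hExy : E x y := (List.chain_cons.mp hchain).1
      have hzip : (x :: y :: rest').zip ((x :: y :: rest').tail)
          = (x, y) :: ((y :: rest').zip ((y :: rest').tail)) := rfl
      by_cases hx : x ∈ S
      · by_cases hy : y ∈ S
        · have := ih ((List.chain_cons.mp hchain).2 : List.Chain' E (y :: rest'))
            y l (List.head?_cons) hl
          rw [show ((if y ∈ S ∧ l ∉ S then 1 else 0) : ℕ)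
              = (if x ∈ S ∧ l ∉ S then 1 else 0) by
            by_cases hls : l ∈ S <;> simp [hx, hy, hls]] at this
          rw [← this]
          congr 1
          apply Finset.filter_congr
          intro q _
          simp only [hzip, List.mem_cons]
          constructor
          · rintro ⟨hE, h1, h2, (rfl | h3)⟩
            · exact absurd hy h2
            · exact ⟨hE, h1, h2, h3⟩
          · rintro ⟨hE, h1, h2, h3⟩
            exact ⟨hE, h1, h2, Or.inr h3⟩
        · have hall : ∀ z ∈ y :: rest', z ∉ S := chain_out hcl rest' y hchain' hy
          have hone : (Finset.univ.filter fun q : V × V =>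
              E q.1 q.2 ∧ q.1 ∈ S ∧ q.2 ∉ S ∧
                q ∈ (x :: y :: rest').zip ((x :: y :: rest').tail)) = {(x, y)} := by
            apply Finset.ext
            intro q
            simp only [Finset.mem_filter, Finset.mem_univ, true_and, Finset.mem_singleton,
              hzip, List.mem_cons]
            constructor
            · rintro ⟨hE, h1, h2, (rfl | h3)⟩
              · rfl
              · exact absurd h1 (hall q.1 (List.of_mem_zip h3).1)
            · rintro rfl
              exact ⟨hExy, hx, hy, Or.inl rfl⟩
          rw [hone, Finset.card_singleton,
            if_pos ⟨hx, hall l hlmem⟩]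
      · have hall : ∀ z ∈ x :: y :: rest', z ∉ S := chain_out hcl (y :: rest') x hchain hx
        have hzero : (Finset.univ.filter fun q : V × V =>
            E q.1 q.2 ∧ q.1 ∈ S ∧ q.2 ∉ S ∧
              q ∈ (x :: y :: rest').zip ((x :: y :: rest').tail)) = ∅ := by
          rw [Finset.filter_eq_empty_iff]
          rintro q _ ⟨hE, h1, h2, h3⟩
          exact hall q.1 (List.of_mem_zip h3).1 h1
        rw [hzero, Finset.card_empty, if_neg (fun hc => hx hc.1)]

end Cuts
theorem aux_cut_eq {B G ι : Type*} [Fintype B] [Fintype G]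
    [DecidableEq B] [DecidableEq G] [Fintype ι] [DecidableEq ι]
    (rB : B → G → ℕ) (rG : G → B → ℕ)
    (hrB : ∀ b, Function.Injective (rB b)) (hrG : ∀ g, Function.Injective (rG g))
    (wt : B → G → ℚ)
    (rot : ι → Rotation B G)
    (Egr : Vtx ι → Vtx ι → Prop) [DecidableRel Egr]
    (hEprec : ∀ i j, Egr (Vtx.node i) (Vtx.node j) → Precedes rB rG (rot i) (rot j))
    (hsrc : ∀ v, ¬ Egr v Vtx.src) (hsnk : ∀ v, ¬ Egr Vtx.snk v)
    (M₀ Mz : B ≃ G) (hM₀ : BoyOptimal rB rG M₀) (hMz : GirlOptimal rB rG Mz)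
    (Pairs : Finset (B × G))
    (Path : B × G → List (Vtx ι))
    (hPath : ∀ p ∈ Pairs, (Path p).Chain' Egr ∧ PathSpec M₀ Mz rot p.1 p.2 (Path p))
    (MU : B ≃ G) (LU : List ι) (hLUall : ∀ i, i ∈ LU)
    (hLUchain : ElimChain rB rG M₀ (LU.map rot) MU)
    (C : Finset ι) (hC : ∀ i ∈ C, ∀ j, Precedes rB rG (rot j) (rot i) → j ∈ C)
    (MC : B ≃ G) (hMC : GeneratedBy rB rG M₀ rot (↑C) MC) :
    cutWeight Egr
        (fun u v => ∑ p ∈ Pairs.filter (fun p => (u, v) ∈ (Path p).zip (Path p).tail),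
          wt p.1 p.2)
        (insert Vtx.src (C.image Vtx.node)) =
      ∑ p ∈ Pairs.filter (fun p => MC p.1 = p.2), wt p.1 p.2 := by
  classical
  set S : Finset (Vtx ι) := insert Vtx.src (C.image Vtx.node) with hS
  have hsrcS : Vtx.src ∈ S := Finset.mem_insert_self _ _
  have hsnkS : Vtx.snk ∉ S := by simp [hS]
  have hnodeS : ∀ i, (Vtx.node i ∈ S ↔ i ∈ C) := by
    intro i
    simp [hS]
  have hScl : ∀ u v, Egr u v → v ∈ S → u ∈ S := by
    intro u v he hv
    cases v with
    | src => exact absurd he (hsrc u)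
    | snk => exact absurd hv hsnkS
    | node j =>
      cases u with
      | src => exact hsrcS
      | snk => exact absurd he (hsnk _)
      | node i => exact (hnodeS i).mpr (hC j ((hnodeS j).mp hv) i (hEprec i j he))
  obtain ⟨L, hLmem, hLchain⟩ := hMC
  have hM₀st : StableM rB rG M₀ := hM₀.1
  have hMCst : StableM rB rG MC := (chain_stable_mono hrB hM₀st hLchain).1
  have hmemL : ∀ i, i ∈ L ↔ i ∈ C := fun i => (hLmem i).trans Finset.mem_coe
  -- uniqueness of moving rotations, via the full chain
  have idx_from_unique : ∀ b g i k, MovesFrom (rot i) b g → MovesFrom (rot k) b g →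
      i = k := by
    intro b g i k hi hk
    by_contra hik
    obtain ⟨A, Bl, hAB⟩ := List.append_of_mem (hLUall i)
    have hkmem := hLUall k
    have hch := hLUchain
    rw [hAB] at hkmem hch
    rcases List.mem_append.mp hkmem with hkA | hkB
    · obtain ⟨A1, A2, hA12⟩ := List.append_of_mem hkA
      rw [hA12, show (A1 ++ k :: A2) ++ i :: Bl = A1 ++ k :: (A2 ++ i :: Bl) by simp,
        List.map_append, List.map_cons] at hch
      exact chain_from_once hrB hM₀st hch hk
        (List.mem_map_of_mem (f := rot) (List.mem_append.mpr (Or.inr (List.mem_cons_self)))) hi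
    · rcases List.mem_cons.mp hkB with rfl | hkB'
      · exact hik rfl
      · rw [List.map_append, List.map_cons] at hch
        exact chain_from_once hrB hM₀st hch hi (List.mem_map_of_mem (f := rot) hkB') hk
  have idx_to_unique : ∀ b g i k, MovesTo (rot i) b g → MovesTo (rot k) b g →
      i = k := by
    intro b g i k hi hk
    by_contra hik
    obtain ⟨A, Bl, hAB⟩ := List.append_of_mem (hLUall i)
    have hkmem := hLUall k
    have hch := hLUchain
    rw [hAB] at hkmem hch
    rcases List.mem_append.mp hkmem with hkA | hkB
    · obtain ⟨A1, A2, hA12⟩ := List.append_of_mem hkA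
      rw [hA12, show (A1 ++ k :: A2) ++ i :: Bl = A1 ++ k :: (A2 ++ i :: Bl) by simp,
        List.map_append, List.map_cons] at hch
      exact chain_to_once hrB hM₀st hch hk
        (List.mem_map_of_mem (f := rot) (List.mem_append.mpr (Or.inr (List.mem_cons_self)))) hi
    · rcases List.mem_cons.mp hkB with rfl | hkB'
      · exact hik rfl
      · rw [List.map_append, List.map_cons] at hch
        exact chain_to_once hrB hM₀st hch hi (List.mem_map_of_mem (f := rot) hkB') hk
  -- claims about MC
  have claim_elimfrom : ∀ b g j, MovesFrom (rot j) b g → j ∈ C → rB b g < rB b (MC b) := by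
    intro b g j hj hjC
    exact chain_elim_from hrB hM₀st hLchain
      ⟨rot j, List.mem_map_of_mem (f := rot) ((hmemL j).mpr hjC), hj⟩
  have claim_stay : ∀ b g iF, M₀ b = g → MovesFrom (rot iF) b g → iF ∉ C → MC b = g := by
    intro b g iF h0 hiF hnC
    refine chain_stay_from hLchain h0 ?_
    rintro ρ hρ hmf
    obtain ⟨k, hkL, rfl⟩ := List.mem_map.mp hρ
    have hkC := (hmemL k).mp hkL
    rw [← idx_from_unique b g iF k hiF hmf] at hkC
    exact hnC hkC
  have claim_to_in : ∀ b g i0, M₀ b ≠ g → MC b = g → MovesTo (rot i0) b g → i0 ∈ C := by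
    intro b g i0 h0 hMCb hi0
    obtain ⟨ρ, hρ, hmt⟩ := chain_to hLchain h0 hMCb
    obtain ⟨k, hkL, rfl⟩ := List.mem_map.mp hρ
    have hkC := (hmemL k).mp hkL
    rw [← idx_to_unique b g i0 k hi0 hmt] at hkC
    exact hkC
  have claim_split : ∀ b g i0, MovesTo (rot i0) b g → i0 ∈ C →
      ∃ (N₂ : B ≃ G) (Bl : List ι), StableM rB rG N₂ ∧ N₂ b = g ∧
        ElimChain rB rG N₂ (Bl.map rot) MC ∧ ∀ k ∈ Bl, k ∈ C := by
    intro b g i0 hmt hi0C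
    obtain ⟨A, Bl, hAB⟩ := List.append_of_mem ((hmemL i0).mpr hi0C)
    have hch := hLchain
    rw [hAB, List.map_append, List.map_cons] at hch
    obtain ⟨A2, hchA, N₂, helim, hchB⟩ := chain_split hch
    obtain ⟨m, hm1, hm2⟩ := hmt
    have hN₂ : N₂ b = g := by rw [← hm1, ← hm2]; exact helim.2.1 m
    have hA2st : StableM rB rG A2 := (chain_stable_mono hrB hM₀st hchA).1
    refine ⟨N₂, Bl, stab_pres hA2st helim, hN₂, hchB, fun k hk => ?_⟩
    refine (hmemL k).mp ?_
    rw [hAB]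
    exact List.mem_append.mpr (Or.inr (List.mem_cons_of_mem _ hk))
  have claim2b : ∀ b g i0, Mz b = g → MovesTo (rot i0) b g → i0 ∈ C → MC b = g := by
    intro b g i0 hz hmt hi0
    obtain ⟨N₂, Bl, hN₂st, hN₂b, hch, _⟩ := claim_split b g i0 hmt hi0
    by_contra hne
    have h1 := chain_depart_strict hrB hN₂st hch hN₂b hne
    have h2 := boy_pessimal hrG hMz hMCst b
    rw [hz] at h2
    omega
  have claim3b : ∀ b g i0 j, MovesTo (rot i0) b g → i0 ∈ C → MovesFrom (rot j) b g →
      j ∉ C → MC b = g := by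
    intro b g i0 j hmt hi0 hmf hj
    obtain ⟨N₂, Bl, hN₂st, hN₂b, hch, hBl⟩ := claim_split b g i0 hmt hi0
    by_contra hne
    obtain ⟨ρ, hρ, hmf'⟩ := chain_from hch hN₂b hne
    obtain ⟨k, hkL, rfl⟩ := List.mem_map.mp hρ
    have hkC := hBl k hkL
    rw [← idx_from_unique b g j k hmf hmf'] at hkC
    exact hj hkC
  -- per-pair crossing count
  have hkey : ∀ p ∈ Pairs,
      (Finset.univ.filter fun q : Vtx ι × Vtx ι =>
          Egr q.1 q.2 ∧ q.1 ∈ S ∧ q.2 ∉ S ∧ q ∈ (Path p).zip (Path p).tail).card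
        = if MC p.1 = p.2 then 1 else 0 := by
    intro p hp
    obtain ⟨hchp, hspec⟩ := hPath p hp
    rcases hspec with ⟨h0, hz, i0, hmf, hhead, hlast⟩ | ⟨h0, hz, i0, hmt, hhead, hlast⟩ |
      ⟨h0, hz, i0, j0, hmt, hmf, hhead, hlast⟩
    · rw [cross_card Egr S hScl (Path p) hchp _ _ hhead hlast]
      refine if_congr ?_ rfl rfl
      constructor
      · rintro ⟨-, hniS⟩
        exact claim_stay p.1 p.2 i0 h0 hmf (fun hc => hniS ((hnodeS i0).mpr hc))
      · intro hMCp
        refine ⟨hsrcS, fun hin => ?_⟩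
        have := claim_elimfrom p.1 p.2 i0 hmf ((hnodeS i0).mp hin)
        rw [hMCp] at this
        omega
    · rw [cross_card Egr S hScl (Path p) hchp _ _ hhead hlast]
      refine if_congr ?_ rfl rfl
      constructor
      · rintro ⟨hin, -⟩
        exact claim2b p.1 p.2 i0 hz hmt ((hnodeS i0).mp hin)
      · intro hMCp
        exact ⟨(hnodeS i0).mpr (claim_to_in p.1 p.2 i0 h0 hMCp hmt), hsnkS⟩
    · rw [cross_card Egr S hScl (Path p) hchp _ _ hhead hlast]
      refine if_congr ?_ rfl rfl
      constructor
      · rintro ⟨hin, hjn⟩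
        exact claim3b p.1 p.2 i0 j0 hmt ((hnodeS i0).mp hin) hmf
          (fun hc => hjn ((hnodeS j0).mpr hc))
      · intro hMCp
        refine ⟨(hnodeS i0).mpr (claim_to_in p.1 p.2 i0 h0 hMCp hmt), fun hin => ?_⟩
        have := claim_elimfrom p.1 p.2 j0 hmf ((hnodeS j0).mp hin)
        rw [hMCp] at this
        omega
  -- sum juggling
  unfold cutWeight
  calc
    ∑ q ∈ Finset.univ.filter (fun q : Vtx ι × Vtx ι => Egr q.1 q.2 ∧ q.1 ∈ S ∧ q.2 ∉ S),
        ∑ p ∈ Pairs.filter (fun p => (q.1, q.2) ∈ (Path p).zip (Path p).tail), wt p.1 p.2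
      = ∑ q ∈ Finset.univ.filter (fun q : Vtx ι × Vtx ι => Egr q.1 q.2 ∧ q.1 ∈ S ∧ q.2 ∉ S),
        ∑ p ∈ Pairs, if q ∈ (Path p).zip (Path p).tail then wt p.1 p.2 else 0 := by
        refine Finset.sum_congr rfl (fun q _ => ?_)
        rw [Finset.sum_filter]
    _ = ∑ p ∈ Pairs, ∑ q ∈ Finset.univ.filter
          (fun q : Vtx ι × Vtx ι => Egr q.1 q.2 ∧ q.1 ∈ S ∧ q.2 ∉ S),
          if q ∈ (Path p).zip (Path p).tail then wt p.1 p.2 else 0 := Finset.sum_comm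
    _ = ∑ p ∈ Pairs, ((Finset.univ.filter fun q : Vtx ι × Vtx ι =>
          Egr q.1 q.2 ∧ q.1 ∈ S ∧ q.2 ∉ S ∧ q ∈ (Path p).zip (Path p).tail).card : ℚ)
            * wt p.1 p.2 := by
        refine Finset.sum_congr rfl (fun p _ => ?_)
        rw [← Finset.sum_filter, Finset.filter_filter, Finset.sum_const, nsmul_eq_mul]
        congr 2
        exact congrArg Finset.card
          (Finset.filter_congr (fun q _ => by simp [and_assoc]))
    _ = ∑ p ∈ Pairs, if MC p.1 = p.2 then wt p.1 p.2 else 0 := by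
        refine Finset.sum_congr rfl (fun p hp => ?_)
        rw [hkey p hp]
        split
        · simp
        · simp
    _ = ∑ p ∈ Pairs.filter (fun p => MC p.1 = p.2), wt p.1 p.2 := by
        rw [Finset.sum_filter]
section Part2Helpers
variable {B G ι : Type*} {rB : B → G → ℕ} {rG : G → B → ℕ}

lemma ideal_of_closed [DecidableEq ι] (rot : ι → Rotation B G)
    (Egr : Vtx ι → Vtx ι → Prop)
    (hEprec : ∀ i j, Egr (Vtx.node i) (Vtx.node j) → Precedes rB rG (rot i) (rot j))
    (hsrc : ∀ v, ¬ Egr v Vtx.src) (hsnk : ∀ v, ¬ Egr Vtx.snk v)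
    (C : Finset ι) (hC : ∀ i ∈ C, ∀ j, Precedes rB rG (rot j) (rot i) → j ∈ C) :
    IdealCut Egr Vtx.src Vtx.snk (insert Vtx.src (C.image Vtx.node)) := by
  refine ⟨Finset.mem_insert_self _ _, by simp, ?_⟩
  intro u v he hv
  cases v with
  | src => exact absurd he (hsrc u)
  | snk => simp at hv
  | node j =>
    have hj : j ∈ C := by
      rcases Finset.mem_insert.mp hv with h | h
      · exact absurd h (by simp)
      · obtain ⟨a, ha, hae⟩ := Finset.mem_image.mp h
        obtain rfl : a = j := by injection hae
        exact ha
    cases u with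
    | src => exact Finset.mem_insert_self _ _
    | snk => exact absurd he (hsnk _)
    | node i =>
      exact Finset.mem_insert.mpr (Or.inr (Finset.mem_image.mpr
        ⟨i, hC j hj i (hEprec i j he), rfl⟩))

lemma ideal_trans {V : Type*} {E : V → V → Prop} {s t : V} {S : Finset V}
    (hS : IdealCut E s t S) :
    ∀ {u v}, Relation.TransGen E u v → v ∈ S → u ∈ S := by
  intro u v h
  induction h with
  | single h => exact fun hv => hS.2.2 _ _ h hv
  | tail _ h2 ih => exact fun hv => ih (hS.2.2 _ _ h2 hv)

lemma match_split [Fintype B] [DecidableEq B] [DecidableEq G]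
    (wt : B → G → ℚ) (Pairs : Finset (B × G)) (N : B ≃ G) :
    matchWeight wt N =
      (∑ b ∈ Finset.univ.filter (fun b => (b, N b) ∉ Pairs), wt b (N b))
        + ∑ p ∈ Pairs.filter (fun p => N p.1 = p.2), wt p.1 p.2 := by
  classical
  have h2 : ∑ b ∈ Finset.univ.filter (fun b => (b, N b) ∈ Pairs), wt b (N b)
      = ∑ p ∈ Pairs.filter (fun p => N p.1 = p.2), wt p.1 p.2 := by
    refine Finset.sum_nbij' (fun b => (b, N b)) (fun p => p.1) ?_ ?_ ?_ ?_ ?_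
    · intro b hb
      refine Finset.mem_filter.mpr ⟨(Finset.mem_filter.mp hb).2, rfl⟩
    · intro p hp
      obtain ⟨hp1, hp2⟩ := Finset.mem_filter.mp hp
      refine Finset.mem_filter.mpr ⟨Finset.mem_univ _, ?_⟩
      have : (p.1, N p.1) = p := by
        rw [hp2]
      rw [this]
      exact hp1
    · intro b _; rfl
    · intro p hp
      obtain ⟨_, hp2⟩ := Finset.mem_filter.mp hp
      show (p.1, N p.1) = p
      rw [hp2]
    · intro b _; rfl
  rw [← h2, add_comm]
  rw [Finset.sum_filter_add_sum_filter_not Finset.univ (fun b => (b, N b) ∈ Pairs)]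
  rfl

lemma fixed_eq [Fintype B] [DecidableEq B] [DecidableEq G]
    (wt : B → G → ℚ) (Pairs : Finset (B × G))
    (hPairs : ∀ p : B × G, p ∈ Pairs ↔
      ((∃ M, StableM rB rG M ∧ M p.1 = p.2) ∧ ∃ M, StableM rB rG M ∧ M p.1 ≠ p.2))
    {N N' : B ≃ G} (hN : StableM rB rG N) (hN' : StableM rB rG N') :
    ∑ b ∈ Finset.univ.filter (fun b => (b, N b) ∉ Pairs), wt b (N b) =
      ∑ b ∈ Finset.univ.filter (fun b => (b, N' b) ∉ Pairs), wt b (N' b) := by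
  classical
  have hsame : ∀ (M M' : B ≃ G), StableM rB rG M → StableM rB rG M' →
      ∀ b, (b, M b) ∉ Pairs → M' b = M b := by
    intro M M' hM hM' b hb
    rw [hPairs] at hb
    push_neg at hb
    have := hb ⟨M, hM, rfl⟩ M' hM'
    exact this
  have hfil : Finset.univ.filter (fun b => (b, N b) ∉ Pairs)
      = Finset.univ.filter (fun b => (b, N' b) ∉ Pairs) := by
    apply Finset.filter_congr
    intro b _
    constructor
    · intro hb
      rw [hsame N N' hN hN' b hb]
      exact hb
    · intro hb
      rw [hsame N' N hN' hN b hb]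
      exact hb
  rw [hfil]
  refine Finset.sum_congr rfl (fun b hb => ?_)
  have := hsame N' N hN' hN b (Finset.mem_filter.mp hb).2
  rw [this]

end Part2Helpers
/-- With edge weights on the augmented rotation DAG obtained by adding, for each
variable pair `bg`, the weight `w_{bg}` to every edge of its path `P_{bg}`:
the weight of the ideal cut defined by a closed subset `C` equals the total weight of
the variable pairs in the stable matching generated by `C`; consequently the matching
generated by `C` is a maximum weight stable matching iff the corresponding cut is a
maximum weight ideal cut. -/
theorem reduction_weight_correspondence {B G ι : Type*} [Fintype B] [Fintype G]
    [DecidableEq B] [DecidableEq G] [Fintype ι] [DecidableEq ι]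
    (rB : B → G → ℕ) (rG : G → B → ℕ)
    (hrB : ∀ b, Function.Injective (rB b)) (hrG : ∀ g, Function.Injective (rG g))
    (wt : B → G → ℚ)
    (rot : ι → Rotation B G) (hrot : ∀ i, IsRotation rB rG (rot i))
    (hinj : ∀ i j, rotPairs (rot i) = rotPairs (rot j) → i = j)
    (hall : ∀ ρ, IsRotation rB rG ρ → ∃ i, rotPairs (rot i) = rotPairs ρ)
    (Egr : Vtx ι → Vtx ι → Prop) [DecidableRel Egr]
    (hEprec : ∀ i j, Egr (Vtx.node i) (Vtx.node j) → Precedes rB rG (rot i) (rot j))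
    (hEreach : ∀ i j, Precedes rB rG (rot i) (rot j) → i ≠ j →
      Relation.TransGen Egr (Vtx.node i) (Vtx.node j))
    (hsrc : ∀ v, ¬ Egr v Vtx.src) (hsnk : ∀ v, ¬ Egr Vtx.snk v)
    (M₀ Mz : B ≃ G) (hM₀ : BoyOptimal rB rG M₀) (hMz : GirlOptimal rB rG Mz)
    (Pairs : Finset (B × G))
    (hPairs : ∀ p : B × G, p ∈ Pairs ↔
      ((∃ M, StableM rB rG M ∧ M p.1 = p.2) ∧ ∃ M, StableM rB rG M ∧ M p.1 ≠ p.2))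
    (Path : B × G → List (Vtx ι))
    (hPath : ∀ p ∈ Pairs, (Path p).Chain' Egr ∧ PathSpec M₀ Mz rot p.1 p.2 (Path p))
    (hgenex : ∀ C : Set ι, (∀ i ∈ C, ∀ j, Precedes rB rG (rot j) (rot i) → j ∈ C) →
      ∃ M : B ≃ G, GeneratedBy rB rG M₀ rot C M)
    (C : Finset ι) (hC : ∀ i ∈ C, ∀ j, Precedes rB rG (rot j) (rot i) → j ∈ C)
    (MC : B ≃ G) (hMC : GeneratedBy rB rG M₀ rot (↑C) MC) :
    cutWeight Egr
        (fun u v => ∑ p ∈ Pairs.filter (fun p => (u, v) ∈ (Path p).zip (Path p).tail),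
          wt p.1 p.2)
        (insert Vtx.src (C.image Vtx.node)) =
      ∑ p ∈ Pairs.filter (fun p => MC p.1 = p.2), wt p.1 p.2 ∧
    (MaxWtStable rB rG wt MC ↔
      MaxIdealCut Egr Vtx.src Vtx.snk
        (fun u v => ∑ p ∈ Pairs.filter (fun p => (u, v) ∈ (Path p).zip (Path p).tail),
          wt p.1 p.2)
        (insert Vtx.src (C.image Vtx.node))) := by
  classical
  obtain ⟨MU, LU, hLUmem, hLUchain⟩ := hgenex Set.univ (fun _ _ _ _ => Set.mem_univ _)
  have hLUall : ∀ i, i ∈ LU := fun i => (hLUmem i).mpr (Set.mem_univ i)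
  have main := aux_cut_eq rB rG hrB hrG wt rot Egr hEprec hsrc hsnk M₀ Mz hM₀ hMz
    Pairs Path hPath MU LU hLUall hLUchain C hC MC hMC
  refine ⟨main, ?_⟩
  have hM₀st : StableM rB rG M₀ := hM₀.1
  obtain ⟨L, hLmem, hLchain⟩ := hMC
  have hMCst : StableM rB rG MC := (chain_stable_mono hrB hM₀st hLchain).1
  set w' : Vtx ι → Vtx ι → ℚ := fun u v =>
    ∑ p ∈ Pairs.filter (fun p => (u, v) ∈ (Path p).zip (Path p).tail), wt p.1 p.2
    with hw'
  -- comparison of matching weights via variable parts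
  have hcmp : ∀ N N' : B ≃ G, StableM rB rG N → StableM rB rG N' →
      ((∑ p ∈ Pairs.filter (fun p => N p.1 = p.2), wt p.1 p.2)
        ≤ (∑ p ∈ Pairs.filter (fun p => N' p.1 = p.2), wt p.1 p.2)
        ↔ matchWeight wt N ≤ matchWeight wt N') := by
    intro N N' hN hN'
    rw [match_split wt Pairs N, match_split wt Pairs N',
      fixed_eq (rB := rB) (rG := rG) wt Pairs hPairs hN hN']
    constructor
    · intro h; linarith
    · intro h; linarith
  constructor
  · -- max stable ⇒ max ideal cut
    intro hmax
    refine ⟨ideal_of_closed rot Egr hEprec hsrc hsnk C hC, ?_⟩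
    intro S' hS'
    set C' : Finset ι := Finset.univ.filter (fun i => Vtx.node i ∈ S') with hC'def
    have hC'cl : ∀ i ∈ C', ∀ j, Precedes rB rG (rot j) (rot i) → j ∈ C' := by
      intro i hi j hprec
      by_cases hij : j = i
      · subst hij; exact hi
      · have htg := hEreach j i hprec hij
        have : Vtx.node j ∈ S' := ideal_trans hS' htg ((Finset.mem_filter.mp hi).2)
        exact Finset.mem_filter.mpr ⟨Finset.mem_univ _, this⟩
    obtain ⟨N, hNgen⟩ := hgenex ↑C'
      (fun i hi j hp => Finset.mem_coe.mpr (hC'cl i (Finset.mem_coe.mp hi) j hp))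
    obtain ⟨LN, hLNmem, hLNchain⟩ := hNgen
    have hNst : StableM rB rG N := (chain_stable_mono hrB hM₀st hLNchain).1
    have hmain' := aux_cut_eq rB rG hrB hrG wt rot Egr hEprec hsrc hsnk M₀ Mz hM₀ hMz
      Pairs Path hPath MU LU hLUall hLUchain C' hC'cl N ⟨LN, hLNmem, hLNchain⟩
    have hSeq : insert Vtx.src (C'.image Vtx.node) = S' := by
      apply Finset.ext
      intro v
      cases v with
      | src => simp [hS'.1]
      | snk =>
        simp only [Finset.mem_insert, Finset.mem_image]
        constructor
        · rintro (h | ⟨a, _, h⟩) <;> simp at h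
        · intro h; exact absurd h hS'.2.1
      | node i =>
        simp only [Finset.mem_insert, Finset.mem_image]
        constructor
        · rintro (h | ⟨a, ha, hae⟩)
          · simp at h
          · obtain rfl : a = i := by injection hae
            exact (Finset.mem_filter.mp ha).2
        · intro h
          exact Or.inr ⟨i, Finset.mem_filter.mpr ⟨Finset.mem_univ _, h⟩, rfl⟩
    rw [hSeq] at hmain'
    rw [hmain', main]
    exact (hcmp N MC hNst hMCst).mpr (hmax.2 N hNst)
  · -- max ideal cut ⇒ max stable
    intro hmax
    refine ⟨hMCst, ?_⟩
    intro N hN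
    obtain ⟨LN, hLN⟩ := reach hrB hrG hM₀ hN rot hrot hall
    set CN : Finset ι := LN.toFinset with hCNdef
    have hCNcl : ∀ k ∈ CN, ∀ j, Precedes rB rG (rot j) (rot k) → j ∈ CN := by
      intro k hk j hprec
      obtain ⟨A, Bl, hAB⟩ := List.append_of_mem (List.mem_toFinset.mp hk)
      have hch := hLN
      rw [hAB, List.map_append, List.map_cons] at hch
      obtain ⟨A2, hchA, N₂, helim, _⟩ := chain_split hch
      obtain ⟨ρ'', hρ'', hpp⟩ := hprec M₀ (A.map rot) A2 hM₀ hchA helim.1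
      obtain ⟨a, haA, rfl⟩ := List.mem_map.mp hρ''
      obtain rfl : a = j := hinj a j hpp
      rw [List.mem_toFinset, hAB]
      exact List.mem_append.mpr (Or.inl haA)
    have hNgen : GeneratedBy rB rG M₀ rot ↑CN N :=
      ⟨LN, fun i => by simp [hCNdef, List.mem_toFinset], hLN⟩
    have hmain' := aux_cut_eq rB rG hrB hrG wt rot Egr hEprec hsrc hsnk M₀ Mz hM₀ hMz
      Pairs Path hPath MU LU hLUall hLUchain CN hCNcl N hNgen
    have hle := hmax.2 (insert Vtx.src (CN.image Vtx.node))
      (ideal_of_closed rot Egr hEprec hsrc hsnk CN hCNcl)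
    rw [hmain', main] at hle
    exact (hcmp N MC hN hMCst).mp hle
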